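/- arXiv:1710.10097 — 2 statements merged into one kernel-verified Lean document; each statement's English description precedes it below -/
import Mathlib

section
/- Let T be a tree on n vertices whose edges e_1,…,e_{n−1} are assigned s×s real matrix weights W_1,…,W_{n−1}, and let D be its distance matrix. Then D is invertible if and only if each weight matrix W_i (i = 1,…,n−1) is invertible and the sum ∑_{i=1}^{n−1} W_i is invertible. -/
/-!
Root the tree at a vertex `r` and let `P` be its parent matrix. Then `1 - P` is invertible (its
inverse is the ancestor matrix), and for every other vertex `v` and every `j`,
`d(j, v) - d(j, parent v) = ± W_v`, where `W_v` is the weight of the edge from `v` to its parent and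
the sign records whether that edge lies on the path from `r` to `j`. Hence the congruence
`(1 - P)ᵀ D (1 - P)` is the arrowhead matrix with zero corner, border blocks `W_v` and diagonal
blocks `-2 W_v`. Adding half of the border to the corner row and column turns it into
`diag(½ ∑ W_v, -2 W_v)`, and `v ↦ {parent v, v}` is a bijection from the non-root vertices onto
the edges.
-/

open Matrix Finset

namespace Matrix

variable {V A : Type*} [Fintype V] [DecidableEq V] [Ring A]

lemma isUnit_diagonal_iff_forall {d : V → A} : IsUnit (diagonal d) ↔ ∀ v, IsUnit (d v) := by
  refine ⟨fun h v => ?_, fun h => (diagonalRingHom V A).isUnit_map (Pi.isUnit_iff.mpr h)⟩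
  obtain ⟨N, hr, hl⟩ := isUnit_iff_exists.mp h
  refine isUnit_iff_exists.mpr ⟨N v v, ?_, ?_⟩
  · simpa using congr_fun₂ hr v v
  · simpa using congr_fun₂ hl v v

section arrowhead

variable (r : V)

def arrowhead (W : V → A) : Matrix V V A :=
  of fun u v => if u = r then (if v = r then 0 else W v)
    else if v = r then W u else if u = v then -2 * W u else 0

lemma sum_arrowhead_row (W : V → A) (u : V) :
    ∑ k ∈ univ.erase r, arrowhead r W u k =
      if u = r then ∑ k ∈ univ.erase r, W k else -2 * W u := by
  split_ifs with hu
  · exact Finset.sum_congr rfl fun k hk => by simp [arrowhead, hu, ne_of_mem_erase hk]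
  · calc ∑ k ∈ univ.erase r, arrowhead r W u k
        = ∑ k ∈ univ.erase r, if u = k then -2 * W u else 0 :=
          Finset.sum_congr rfl fun k hk => by simp [arrowhead, hu, ne_of_mem_erase hk]
      _ = -2 * W u := by rw [Finset.sum_ite_eq, if_pos (mem_erase.mpr ⟨hu, mem_univ u⟩)]

lemma sum_arrowhead_col (W : V → A) (k : V) :
    ∑ u ∈ univ.erase r, arrowhead r W u k =
      if k = r then ∑ u ∈ univ.erase r, W u else -2 * W k := by
  split_ifs with hk
  · exact Finset.sum_congr rfl fun u hu => by simp [arrowhead, hk, ne_of_mem_erase hu]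
  · calc ∑ u ∈ univ.erase r, arrowhead r W u k
        = ∑ u ∈ univ.erase r, if u = k then -2 * W u else 0 :=
          Finset.sum_congr rfl fun u hu => by simp [arrowhead, hk, ne_of_mem_erase hu]
      _ = -2 * W k := by rw [Finset.sum_ite_eq', if_pos (mem_erase.mpr ⟨hk, mem_univ k⟩)]

variable [Invertible (2 : A)]

def halfColumn : Matrix V V A := of fun u v => if u ≠ r ∧ v = r then ⅟2 else 0

lemma isUnit_one_add_halfColumn : IsUnit (1 + halfColumn r : Matrix V V A) := by
  refine IsNilpotent.isUnit_one_add ⟨2, ?_⟩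
  ext u v
  rw [sq, mul_apply, Matrix.zero_apply]
  refine Finset.sum_eq_zero fun k _ => ?_
  by_cases hk : k = r <;> simp [halfColumn, hk]

lemma isUnit_one_add_halfColumn_transpose : IsUnit (1 + halfColumn r : Matrix V V A)ᵀ := by
  rw [transpose_add, transpose_one]
  refine IsNilpotent.isUnit_one_add ⟨2, ?_⟩
  ext u v
  rw [sq, mul_apply, Matrix.zero_apply]
  refine Finset.sum_eq_zero fun k _ => ?_
  by_cases hk : k = r <;> simp [halfColumn, hk]

lemma mul_one_add_halfColumn_apply (N : Matrix V V A) (u v : V) :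
    (N * (1 + halfColumn r) : Matrix V V A) u v =
      if v = r then N u r + (∑ k ∈ univ.erase r, N u k) * ⅟2 else N u v := by
  rw [Matrix.mul_add, Matrix.mul_one, Matrix.add_apply, mul_apply]
  split_ifs with hv
  · simp only [halfColumn, of_apply, hv, and_true, mul_ite, mul_zero, Finset.sum_mul]
    rw [← Finset.sum_filter, Finset.filter_ne']
  · simp [halfColumn, hv]

lemma one_add_halfColumn_transpose_mul_apply (N : Matrix V V A) (u v : V) :
    ((1 + halfColumn r)ᵀ * N : Matrix V V A) u v =
      if u = r then N r v + ⅟2 * ∑ k ∈ univ.erase r, N k v else N u v := by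
  rw [transpose_add, transpose_one, Matrix.add_mul, Matrix.one_mul, Matrix.add_apply, mul_apply]
  split_ifs with hu
  · simp only [halfColumn, transpose_apply, of_apply, hu, and_true, ite_mul, zero_mul,
      Finset.mul_sum]
    rw [← Finset.sum_filter, Finset.filter_ne']
  · simp [halfColumn, hu]

lemma halfColumn_congr_arrowhead (W : V → A) :
    (1 + halfColumn r)ᵀ * arrowhead r W * (1 + halfColumn r) =
      diagonal fun u => if u = r then ⅟2 * ∑ v ∈ univ.erase r, W v else -2 * W u := by
  have half_two (a : A) : ⅟2 * (-2 * a) = -a := by rw [neg_mul, mul_neg, invOf_mul_cancel_left]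
  have two_half (a : A) : -2 * a * ⅟2 = -a := by
    rw [neg_mul, neg_mul, (Commute.ofNat_left 2 a).eq, mul_invOf_cancel_right]
  have hrows : (1 + halfColumn r)ᵀ * arrowhead r W = of fun u k =>
      if u = r then (if k = r then ⅟2 * ∑ v ∈ univ.erase r, W v else 0) else arrowhead r W u k := by
    ext u k
    rw [one_add_halfColumn_transpose_mul_apply, sum_arrowhead_col]
    by_cases hu : u = r <;> by_cases hk : k = r
    · simp only [arrowhead, of_apply, hu, hk, if_true, zero_add]
    · simp only [arrowhead, of_apply, hu, hk, if_true, if_false, half_two, add_neg_cancel]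
    all_goals simp only [of_apply, hu, if_false]
  ext u v
  rw [hrows, mul_one_add_halfColumn_apply]
  by_cases hu : u = r <;> by_cases hv : v = r
  · have hzero : ∑ k ∈ univ.erase r, (if k = r then ⅟2 * ∑ v ∈ univ.erase r, W v else 0) = 0 :=
      Finset.sum_eq_zero fun k hk => if_neg (ne_of_mem_erase hk)
    simp only [hu, hv, of_apply, if_true, hzero, zero_mul, add_zero, diagonal_apply_eq]
  · simp only [hu, of_apply, if_true, if_neg hv, diagonal_apply_ne _ (Ne.symm hv)]
  · simp only [hv, of_apply, if_neg hu, if_true]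
    rw [sum_arrowhead_row, if_neg hu, two_half, diagonal_apply_ne _ hu]
    simp [arrowhead, hu]
  · simp [arrowhead, diagonal_apply, hu, hv]

lemma isUnit_arrowhead_iff (W : V → A) :
    IsUnit (arrowhead r W) ↔ (∀ v ≠ r, IsUnit (W v)) ∧ IsUnit (∑ v ∈ univ.erase r, W v) := by
  rw [← (isUnit_one_add_halfColumn_transpose (A := A) r).mul_left_iff,
    ← (isUnit_one_add_halfColumn (A := A) r).mul_right_iff, halfColumn_congr_arrowhead,
    isUnit_diagonal_iff_forall]
  have h2 : IsUnit (-2 : A) := (isUnit_of_invertible 2).neg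
  constructor
  · intro h
    refine ⟨fun v hv => ?_, ?_⟩
    · simpa only [if_neg hv, h2.mul_left_iff] using h v
    · simpa only [if_true, (isUnit_of_invertible _).mul_left_iff] using h r
  · rintro ⟨hW, hS⟩ u
    split_ifs with hu
    · exact (isUnit_of_invertible _).mul_left_iff.mpr hS
    · exact h2.mul_left_iff.mpr (hW u hu)

end arrowhead

end Matrix

namespace SimpleGraph.IsTree

variable {V : Type*} {G : SimpleGraph V} (hT : G.IsTree)

noncomputable def path (u v : V) : G.Walk u v :=
  (hT.existsUnique_path u v).exists.choose

lemma isPath_path (u v : V) : (hT.path u v).IsPath :=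
  (hT.existsUnique_path u v).exists.choose_spec

lemma eq_path {u v : V} {p : G.Walk u v} (hp : p.IsPath) : p = hT.path u v :=
  (hT.existsUnique_path u v).unique hp (hT.isPath_path u v)

lemma path_self (v : V) : hT.path v v = .nil :=
  (hT.eq_path .nil).symm

lemma reverse_path (u v : V) : (hT.path u v).reverse = hT.path v u :=
  hT.eq_path (hT.isPath_path u v).reverse

lemma path_concat_or {v w : V} (h : G.Adj v w) (u : V) :
    hT.path u w = (hT.path u v).concat h ∨ hT.path u v = (hT.path u w).concat h.symm := by
  by_cases hv : v ∈ (hT.path u w).support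
  · exact .inl <| hT.isAcyclic.path_concat (hT.isPath_path u v) (hT.isPath_path u w) h hv
  · refine .inr <| hT.isAcyclic.path_concat (hT.isPath_path u w) (hT.isPath_path u v) h.symm ?_
    exact hT.isAcyclic.mem_support_of_ne_mem_support_of_adj_of_isPath (hT.isPath_path u v)
      (hT.isPath_path u w) h hv

lemma notMem_edges_of_path_eq_concat {u v w : V} {h : G.Adj v w}
    (hp : hT.path u w = (hT.path u v).concat h) : s(v, w) ∉ (hT.path u v).edges := by
  have := (hT.isPath_path u w).isTrail.edges_nodup
  rw [hp, Walk.edges_concat, List.concat_eq_append, List.nodup_append] at this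
  exact fun he => this.2.2 _ he _ (List.mem_singleton_self _) rfl

lemma mem_edges_path_iff [DecidableEq V] {a b : V} {e : Sym2 V} (he : e ∉ (hT.path a b).edges)
    (c : V) :
    e ∈ (hT.path c a).edges ↔ e ∈ (hT.path c b).edges := by
  have step : ∀ {x y}, e ∉ (hT.path x y).edges → e ∈ (hT.path c y).edges →
      e ∈ (hT.path c x).edges := by
    intro x y hxy hy
    rw [← hT.eq_path ((hT.path c x).append (hT.path x y)).bypass_isPath] at hy
    have := Walk.edges_bypass_subset_edges _ hy
    rw [Walk.edges_append, List.mem_append] at this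
    exact this.resolve_right hxy
  refine ⟨step ?_, step he⟩
  rwa [← hT.reverse_path, Walk.edges_reverse, List.mem_reverse]

section weightedDist

variable {M : Type*} [AddCommMonoid M] (w : Sym2 V → M)

noncomputable def weightedDist (u v : V) : M :=
  ((hT.path u v).edges.map w).sum

lemma weightedDist_self (v : V) : hT.weightedDist w v v = 0 := by
  simp [weightedDist, path_self]

lemma weightedDist_comm (u v : V) : hT.weightedDist w u v = hT.weightedDist w v u := by
  rw [weightedDist, weightedDist, ← hT.reverse_path, Walk.edges_reverse, List.map_reverse,
    List.sum_reverse]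

lemma weightedDist_of_path_eq_concat {u v x : V} {h : G.Adj v x}
    (hp : hT.path u x = (hT.path u v).concat h) :
    hT.weightedDist w u x = hT.weightedDist w u v + w s(v, x) := by
  simp [weightedDist, hp, Walk.edges_concat]

end weightedDist

lemma weightedDist_sub_weightedDist_of_adj [DecidableEq V] {M : Type*} [AddCommGroup M]
    (w : Sym2 V → M) {v x : V} (h : G.Adj v x) (u : V) :
    hT.weightedDist w u x - hT.weightedDist w u v =
      if s(v, x) ∈ (hT.path u v).edges then -w s(v, x) else w s(v, x) := by
  rcases hT.path_concat_or h u with hp | hp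
  · rw [if_neg (hT.notMem_edges_of_path_eq_concat hp), hT.weightedDist_of_path_eq_concat w hp]
    abel
  · have hmem : s(v, x) ∈ (hT.path u v).edges := by
      simp [hp, Walk.edges_concat, Sym2.eq_swap]
    rw [if_pos hmem, hT.weightedDist_of_path_eq_concat w hp, Sym2.eq_swap]
    abel

section parent

variable (r : V)

/-- `parent r r = r`; every statement about parents excludes the root. -/
noncomputable def parent (v : V) : V := (hT.path r v).penultimate

noncomputable def parentEdge (v : V) : Sym2 V := s(hT.parent r v, v)

variable {r}

lemma parent_of_path_eq_concat {q v : V} {h : G.Adj q v}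
    (hp : hT.path r v = (hT.path r q).concat h) : v ≠ r ∧ hT.parent r v = q := by
  refine ⟨?_, by rw [parent, hp, Walk.penultimate_concat]⟩
  rintro rfl
  have := congrArg Walk.length hp
  simp [path_self] at this

lemma path_eq_concat_parent {v : V} (hv : v ≠ r) :
    ∃ h : G.Adj (hT.parent r v) v, hT.path r v = (hT.path r (hT.parent r v)).concat h := by
  have h := (hT.path r v).adj_penultimate (Walk.not_nil_of_ne hv.symm)
  refine ⟨h, ?_⟩
  change hT.path r v = (hT.path r (hT.path r v).penultimate).concat h
  rw [← hT.eq_path (hT.isPath_path r v).dropLast]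
  exact (Walk.concat_dropLast h).symm

lemma length_path_parent {v : V} (hv : v ≠ r) :
    (hT.path r (hT.parent r v)).length + 1 = (hT.path r v).length := by
  obtain ⟨h, hp⟩ := hT.path_eq_concat_parent hv
  rw [hp, Walk.length_concat]

lemma adj_parent {v : V} (hv : v ≠ r) : G.Adj (hT.parent r v) v :=
  (hT.path_eq_concat_parent hv).1

lemma edges_path_eq_concat_parentEdge {v : V} (hv : v ≠ r) :
    (hT.path r v).edges = (hT.path r (hT.parent r v)).edges ++ [hT.parentEdge r v] := by
  obtain ⟨h, hp⟩ := hT.path_eq_concat_parent hv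
  rw [hp, Walk.edges_concat, List.concat_eq_append, parentEdge]

lemma support_path_eq_concat_parent {v : V} (hv : v ≠ r) :
    (hT.path r v).support = (hT.path r (hT.parent r v)).support ++ [v] := by
  obtain ⟨h, hp⟩ := hT.path_eq_concat_parent hv
  rw [hp, Walk.support_concat]

lemma notMem_support_path_parent {v : V} (hv : v ≠ r) :
    v ∉ (hT.path r (hT.parent r v)).support := by
  obtain ⟨h, hp⟩ := hT.path_eq_concat_parent hv
  have := hT.isPath_path r v
  rw [hp, Walk.concat_isPath_iff] at this
  exact this.2

lemma parentEdge_notMem_edges_path_parent {v : V} (hv : v ≠ r) :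
    hT.parentEdge r v ∉ (hT.path r (hT.parent r v)).edges :=
  hT.notMem_edges_of_path_eq_concat (hT.path_eq_concat_parent hv).2

lemma bijOn_parentEdge : Set.BijOn (hT.parentEdge r) {r}ᶜ G.edgeSet := by
  refine ⟨fun v hv => hT.adj_parent hv, ?_, ?_⟩
  · intro u hu v hv huv
    rcases Sym2.eq_iff.mp huv with ⟨-, h⟩ | ⟨hpu, hpv⟩
    · exact h
    · have hlu := hT.length_path_parent hu
      have hlv := hT.length_path_parent hv
      rw [hpu] at hlu
      rw [← hpv] at hlv
      omega
  · rintro e he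
    induction e using Sym2.ind with | _ x y => ?_
    rcases hT.path_concat_or he r with hp | hp
    · obtain ⟨hy, hpy⟩ := hT.parent_of_path_eq_concat hp
      exact ⟨y, hy, by rw [parentEdge, hpy]⟩
    · obtain ⟨hx, hpx⟩ := hT.parent_of_path_eq_concat hp
      exact ⟨x, hx, by rw [parentEdge, hpx, Sym2.eq_swap]⟩

lemma parentEdge_mem_edges_path_iff {u v : V} (hu : u ≠ r) (hv : v ≠ r) (huv : v ≠ u) :
    hT.parentEdge r v ∈ (hT.path r u).edges ↔
      hT.parentEdge r v ∈ (hT.path r (hT.parent r u)).edges := by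
  rw [hT.edges_path_eq_concat_parentEdge hu, List.mem_append, List.mem_singleton,
    or_iff_left (fun h => huv ((hT.bijOn_parentEdge).injOn hv hu h))]

lemma weightedDist_sub_weightedDist_parent [DecidableEq V] {M : Type*} [AddCommGroup M]
    (w : Sym2 V → M) {v : V} (hv : v ≠ r) (u : V) :
    hT.weightedDist w u v - hT.weightedDist w u (hT.parent r v) =
      if hT.parentEdge r v ∈ (hT.path r u).edges then -w (hT.parentEdge r v)
      else w (hT.parentEdge r v) := by
  rw [hT.weightedDist_sub_weightedDist_of_adj w (hT.adj_parent hv), ← parentEdge]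
  refine if_congr ?_ rfl rfl
  rw [← hT.mem_edges_path_iff (hT.parentEdge_notMem_edges_path_parent hv), ← hT.reverse_path,
    Walk.edges_reverse, List.mem_reverse]

end parent

section distMatrix

variable [DecidableEq V] (r : V)

noncomputable def parentMatrix {R : Type*} [Zero R] [One R] : Matrix V V R :=
  of fun u v => if v ≠ r ∧ u = hT.parent r v then 1 else 0

noncomputable def ancestorMatrix {R : Type*} [Zero R] [One R] : Matrix V V R :=
  of fun v j => if v ∈ (hT.path r j).support then 1 else 0

lemma map_parentMatrix {R S : Type*} [Ring R] [Ring S] (f : R →+* S) :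
    (hT.parentMatrix r).map f = hT.parentMatrix r := by
  ext u v
  simp [parentMatrix, apply_ite f]

variable [Fintype V]

lemma mul_one_sub_parentMatrix_apply {R : Type*} [Ring R] (N : Matrix V V R) (u v : V) :
    (N * (1 - hT.parentMatrix r) : Matrix V V R) u v =
      if v = r then N u r else N u v - N u (hT.parent r v) := by
  rw [Matrix.mul_sub, Matrix.mul_one, Matrix.sub_apply, mul_apply]
  split_ifs with hv <;> simp [parentMatrix, hv]

lemma one_sub_parentMatrix_transpose_mul_apply {R : Type*} [Ring R] (N : Matrix V V R) (u v : V) :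
    ((1 - hT.parentMatrix r)ᵀ * N : Matrix V V R) u v =
      if u = r then N r v else N u v - N (hT.parent r u) v := by
  rw [transpose_sub, transpose_one, Matrix.sub_mul, Matrix.one_mul, Matrix.sub_apply, mul_apply]
  split_ifs with hu <;> simp [parentMatrix, hu]

lemma ancestorMatrix_mul_one_sub_parentMatrix :
    (hT.ancestorMatrix r * (1 - hT.parentMatrix r) : Matrix V V ℤ) = 1 := by
  ext v z
  rw [mul_one_sub_parentMatrix_apply]
  split_ifs with hz
  · simp [ancestorMatrix, hz, path_self, one_apply]
  · simp only [ancestorMatrix, of_apply, hT.support_path_eq_concat_parent hz, List.mem_append,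
      List.mem_singleton, one_apply]
    by_cases hvz : v = z
    · subst hvz
      simp [hT.notMem_support_path_parent hz]
    · simp [hvz]

lemma isUnit_one_sub_parentMatrix (R : Type*) [Ring R] :
    IsUnit (1 - hT.parentMatrix r : Matrix V V R) ∧
      IsUnit (1 - hT.parentMatrix r : Matrix V V R)ᵀ := by
  -- Over the commutative ring `ℤ` a left inverse suffices; the entries are integers, so the
  -- result transfers to any ring.
  have hZ : IsUnit (1 - hT.parentMatrix r : Matrix V V ℤ) := (isUnit_iff_isUnit_det _).mpr
    (isUnit_det_of_left_inverse (hT.ancestorMatrix_mul_one_sub_parentMatrix r))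
  have hmap : (Int.castRingHom R).mapMatrix (1 - hT.parentMatrix r) = 1 - hT.parentMatrix r := by
    rw [map_sub, map_one, RingHom.mapMatrix_apply, map_parentMatrix]
  constructor
  · rw [← hmap]
    exact (Int.castRingHom R).mapMatrix.isUnit_map hZ
  · rw [← hmap, RingHom.mapMatrix_apply, ← transpose_map]
    exact (Int.castRingHom R).mapMatrix.isUnit_map ((isUnit_transpose _).mpr hZ)

variable {A : Type*} [Ring A]

noncomputable def distMatrix (w : Sym2 V → A) : Matrix V V A := of (hT.weightedDist w)

lemma parentMatrix_congr_distMatrix (w : Sym2 V → A) :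
    (1 - hT.parentMatrix r)ᵀ * hT.distMatrix w * (1 - hT.parentMatrix r) =
      arrowhead r fun v => w (hT.parentEdge r v) := by
  ext u v
  rw [mul_one_sub_parentMatrix_apply]
  simp only [one_sub_parentMatrix_transpose_mul_apply, distMatrix, of_apply]
  have from_root {x : V} (hx : x ≠ r) : hT.weightedDist w r x -
      hT.weightedDist w r (hT.parent r x) = w (hT.parentEdge r x) := by
    simp [hT.weightedDist_sub_weightedDist_parent w hx, path_self]
  by_cases hu : u = r <;> by_cases hv : v = r
  · simp [hu, hv, weightedDist_self, arrowhead]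
  · simp [hu, hv, from_root hv, arrowhead]
  · simp only [hu, hv, if_true, if_false, hT.weightedDist_comm w _ r, from_root hu, arrowhead,
      of_apply]
  · simp only [if_neg hv, if_neg hu]
    rw [sub_sub_sub_comm, hT.weightedDist_sub_weightedDist_parent w hv,
      hT.weightedDist_sub_weightedDist_parent w hv]
    by_cases huv : v = u
    · subst huv
      rw [if_pos, if_neg (hT.parentEdge_notMem_edges_path_parent hv)]
      · simp [arrowhead, hv, two_mul, sub_eq_add_neg]
      · simp [hT.edges_path_eq_concat_parentEdge hv]
    · simp only [hT.parentEdge_mem_edges_path_iff hu hv huv, sub_self]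
      simp [arrowhead, hu, hv, Ne.symm huv]

theorem isUnit_distMatrix_iff [DecidableRel G.Adj] [Invertible (2 : A)] (w : Sym2 V → A) :
    IsUnit (hT.distMatrix w) ↔
      (∀ e ∈ G.edgeFinset, IsUnit (w e)) ∧ IsUnit (∑ e ∈ G.edgeFinset, w e) := by
  obtain ⟨r⟩ := hT.connected.nonempty
  obtain ⟨hB, hBt⟩ := hT.isUnit_one_sub_parentMatrix r A
  have hbij : Set.BijOn (hT.parentEdge r) (univ.erase r : Finset V) G.edgeFinset := by
    simpa [Set.compl_eq_univ_sdiff] using hT.bijOn_parentEdge (r := r)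
  rw [← hBt.mul_left_iff, ← hB.mul_right_iff, parentMatrix_congr_distMatrix,
    isUnit_arrowhead_iff, Finset.sum_nbij _ hbij.mapsTo hbij.injOn hbij.surjOn (fun _ _ => rfl)]
  refine and_congr_left' ⟨fun h e he => ?_, fun h v hv => h _ (hbij.mapsTo (by simpa using hv))⟩
  obtain ⟨v, hv, rfl⟩ := hbij.surjOn he
  exact h v (by simpa using hv)

end distMatrix

end SimpleGraph.IsTree

/-- Let `T` be a tree on `n` vertices whose edges are assigned `s × s` real
matrix weights and let `D` be its distance matrix.  Then `D` is invertible if and only if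
every edge weight matrix is invertible and the sum of all the edge weight matrices is
invertible. -/
theorem distanceMatrix_invertible_iff {n s : ℕ}
    (G : SimpleGraph (Fin n)) [DecidableRel G.Adj] (hT : G.IsTree)
    (w : Sym2 (Fin n) → Matrix (Fin s) (Fin s) ℝ)
    (D : Matrix (Fin n × Fin s) (Fin n × Fin s) ℝ)
    (hD : ∀ (i j : Fin n) (p : G.Walk i j), p.IsPath →
      ∀ a b, D (i, a) (j, b) = ((p.edges.map w).sum) a b) :
    IsUnit D ↔ (∀ e ∈ G.edgeFinset, IsUnit (w e)) ∧ IsUnit (∑ e ∈ G.edgeFinset, w e) := by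
  have hblocks : (comp _ _ _ _ ℝ).symm D = hT.distMatrix w := by
    ext i j a b
    exact hD i j _ (hT.isPath_path i j) a b
  let : Invertible (2 : Matrix (Fin s) (Fin s) ℝ) :=
    (Invertible.map (algebraMap ℝ _) 2).copy 2 (map_ofNat _ 2).symm
  rw [← isUnit_comp_symm_iff, hblocks, hT.isUnit_distMatrix_iff]
end

section
/- Let T be a tree on n vertices whose edges are assigned s×s real positive definite matrix weights, let D be its distance matrix, and let L be its Laplacian matrix formed from the inverses of the weights. If H is any generalized inverse of L (i.e., L H L = L), written in n×n block form with s×s blocks H_{i,j}, then for all vertices i, j: H_{i,i} + H_{j,j} − H_{i,j} − H_{j,i} = D_{i,j}, where D_{i,j} is the (i,j) block of D. -/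
/-!
For an edge `uv` of the tree and `a : Fin s`, let `y` be column `a` of the weight of `uv` on
every vertex of the component of `u` in `T - uv`, and zero elsewhere. Across every other edge `y`
is constant, so `L y = e_(u,a) - e_(v,a)`. Summing these vectors along the path from `i` to `j`
gives `y_b` with `L y_b = e_(i,b) - e_(j,b)`, `y_b(j, a) = 0` and `y_b(i, a) = D_{i,j}(a, b)`.
As `L` is symmetric, `x_a := e_(i,a) - e_(j,a)` equals `y_aᵀ L`, so `LHL = L` gives
`x_aᵀ H x_b = y_aᵀ L H L y_b = x_aᵀ y_b`, which is the claimed identity.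
-/

open Matrix

/-- Matrix-weighted Laplacian: each edge weight is replaced by its inverse. -/
noncomputable def matLap {n s : ℕ} (G : SimpleGraph (Fin n)) [DecidableRel G.Adj]
    (w : Sym2 (Fin n) → Matrix (Fin s) (Fin s) ℝ) :
    Matrix (Fin n × Fin s) (Fin n × Fin s) ℝ :=
  Matrix.of fun p q =>
    if p.1 = q.1 then (∑ k ∈ G.neighborFinset p.1, (w s(p.1, k))⁻¹) p.2 q.2
    else if G.Adj p.1 q.1 then (-(w s(p.1, q.1))⁻¹) p.2 q.2
    else 0

theorem dotProduct_mulVec_of_mul_mul_eq {m n R : Type*} [Fintype m] [Fintype n]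
    [NonUnitalSemiring R] {L : Matrix m n R} {H : Matrix n m R} (hH : L * H * L = L)
    {x y' : n → R} {x' y : m → R} (hx : y ᵥ* L = x) (hx' : L *ᵥ y' = x') :
    x ⬝ᵥ H *ᵥ x' = x ⬝ᵥ y' := by
  subst hx hx'
  rw [dotProduct_mulVec, dotProduct_mulVec, vecMul_vecMul, vecMul_vecMul, ← Matrix.mul_assoc, hH]

theorem SimpleGraph.reachable_deleteEdges_iff_of_adj {V : Type*} {G : SimpleGraph V}
    {e : Sym2 V} {x y z : V} (h : G.Adj x y) (he : s(x, y) ≠ e) :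
    (G.deleteEdges {e}).Reachable x z ↔ (G.deleteEdges {e}).Reachable y z := by
  have hadj : (G.deleteEdges {e}).Adj x y := by simp [h, he]
  exact ⟨hadj.symm.reachable.trans, hadj.reachable.trans⟩

theorem SimpleGraph.Walk.IsPath.reachable_deleteEdges_of_mem_darts {V : Type*}
    {G : SimpleGraph V} {i j : V} {p : G.Walk i j} (hp : p.IsPath) {d : G.Dart}
    (hd : d ∈ p.darts) :
    (G.deleteEdges {d.edge}).Reachable i d.fst ∧ (G.deleteEdges {d.edge}).Reachable j d.snd := by
  induction p with
  | nil => simp at hd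
  | @cons i v j h q ih =>
    have hniv : s(i, v) ∉ q.edges := ((SimpleGraph.Walk.isTrail_cons h q).mp hp.isTrail).2
    rcases List.mem_cons.mp hd with rfl | hd
    · refine ⟨.refl _, ⟨(q.toDeleteEdges {s(i, v)} fun e he he' => hniv ?_).reverse⟩⟩
      rwa [← Set.mem_singleton_iff.mp he']
    · obtain ⟨hv, hj⟩ := ih hp.of_cons hd
      have hne : s(i, v) ≠ d.edge := fun he => hniv (he ▸ List.mem_map_of_mem hd)
      have hadj : (G.deleteEdges {d.edge}).Adj i v := by simp [h, hne]
      exact ⟨hadj.reachable.trans hv, hj⟩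

section MatLap

variable {n s : ℕ} {G : SimpleGraph (Fin n)} [DecidableRel G.Adj]
  {w : Sym2 (Fin n) → Matrix (Fin s) (Fin s) ℝ}

theorem matLap_isSymm (hw : ∀ e ∈ G.edgeSet, (w e).IsHermitian) : (matLap G w).IsSymm := by
  have hinv {p q : Fin n} (h : G.Adj p q) (c d : Fin s) :
      (w s(p, q))⁻¹ d c = (w s(p, q))⁻¹ c d := by
    simpa using (hw _ (G.mem_edgeSet.mpr h)).inv.apply c d
  ext ⟨p, c⟩ ⟨q, d⟩
  simp only [transpose_apply, matLap, of_apply]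
  by_cases hpq : p = q
  · subst hpq
    simp only [if_true, Matrix.sum_apply]
    exact Finset.sum_congr rfl fun k hk => hinv ((G.mem_neighborFinset _ _).mp hk) c d
  · by_cases hadj : G.Adj p q
    · simp [hpq, Ne.symm hpq, hadj, hadj.symm, Sym2.eq_swap, hinv hadj]
    · simp [hpq, Ne.symm hpq, hadj, mt G.adj_symm hadj]

theorem matLap_mulVec_apply (y : Fin n × Fin s → ℝ) (p : Fin n) (c : Fin s) :
    (matLap G w *ᵥ y) (p, c) =
      ∑ k ∈ G.neighborFinset p, ((w s(p, k))⁻¹ *ᵥ fun d => y (p, d) - y (k, d)) c := by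
  have hdiag : ∑ d, matLap G w (p, c) (p, d) * y (p, d) =
      ∑ k ∈ G.neighborFinset p, ((w s(p, k))⁻¹ *ᵥ fun d => y (p, d)) c := by
    simp only [matLap, of_apply, if_true, Matrix.sum_apply, Finset.sum_mul, mulVec, dotProduct]
    exact Finset.sum_comm
  have hoff (q : Fin n) (hq : q ≠ p) :
      ∑ d, matLap G w (p, c) (q, d) * y (q, d) =
        if G.Adj p q then -((w s(p, q))⁻¹ *ᵥ fun d => y (q, d)) c else 0 := by
    split_ifs with hadj
    · simp [matLap, Ne.symm hq, hadj, mulVec, dotProduct]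
    · simp [matLap, Ne.symm hq, hadj]
  rw [mulVec, dotProduct, Fintype.sum_prod_type, ← Finset.add_sum_erase _ _ (Finset.mem_univ p),
    hdiag, Finset.sum_congr rfl fun q hq => hoff q (Finset.ne_of_mem_erase hq),
    Finset.sum_erase _ (a := p) (if_neg G.irrefl), ← Finset.sum_filter, ← G.neighborFinset_eq_filter,
    ← Finset.sum_add_distrib]
  refine Finset.sum_congr rfl fun k _ => ?_
  rw [← sub_eq_add_neg, ← Pi.sub_apply, ← mulVec_sub]
  rfl

variable (G w) in
open Classical in
noncomputable def cutVec (u v : Fin n) (a : Fin s) : Fin n × Fin s → ℝ :=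
  fun q => if (G.deleteEdges {s(u, v)}).Reachable q.1 u then w s(u, v) q.2 a else 0

theorem cutVec_sub_eq_zero {u v p k : Fin n} (h : G.Adj p k) (he : s(p, k) ≠ s(u, v))
    (a : Fin s) : (fun d => cutVec G w u v a (p, d) - cutVec G w u v a (k, d)) = 0 := by
  funext d
  simp [cutVec, SimpleGraph.reachable_deleteEdges_iff_of_adj h he]

theorem cutVec_sub_cutVec_of_adj (hG : G.IsAcyclic) {u v : Fin n} (huv : G.Adj u v)
    (a : Fin s) : (fun d => cutVec G w u v a (u, d) - cutVec G w u v a (v, d)) =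
      fun d => w s(u, v) d a := by
  have hsep : ¬(G.deleteEdges {s(u, v)}).Reachable v u := fun h =>
    SimpleGraph.isBridge_iff.mp
      (SimpleGraph.isAcyclic_iff_forall_isBridge.mp hG (G.mem_edgeSet.mpr huv)) h.symm
  funext d
  simp [cutVec, hsep]

theorem matLap_mulVec_cutVec (hG : G.IsAcyclic) {u v : Fin n} (huv : G.Adj u v)
    (hW : IsUnit (w s(u, v))) (a : Fin s) :
    matLap G w *ᵥ cutVec G w u v a = Pi.single (u, a) 1 - Pi.single (v, a) 1 := by
  have hWW : (w s(u, v))⁻¹ * w s(u, v) = 1 :=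
    nonsing_inv_mul _ ((isUnit_iff_isUnit_det _).mp hW)
  ext ⟨p, c⟩
  have hzero : ∀ k ∈ G.neighborFinset p, s(p, k) ≠ s(u, v) →
      ((w s(p, k))⁻¹ *ᵥ fun d => cutVec G w u v a (p, d) - cutVec G w u v a (k, d)) c = 0 :=
    fun k hk he => by
      rw [cutVec_sub_eq_zero ((G.mem_neighborFinset _ _).mp hk) he, mulVec_zero]
      rfl
  rw [matLap_mulVec_apply]
  by_cases hpu : p = u
  · subst hpu
    rw [Finset.sum_eq_single_of_mem v ((G.mem_neighborFinset _ _).mpr huv)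
      fun k hk hkv => hzero k hk (by simp [hkv, huv.ne]), cutVec_sub_cutVec_of_adj hG huv]
    change ((w s(p, v))⁻¹ * w s(p, v)) c a = _
    simp [hWW, one_apply, Pi.single_apply, huv.ne']
  by_cases hpv : p = v
  · subst hpv
    have hcol : (fun d => cutVec G w u p a (p, d) - cutVec G w u p a (u, d)) =
        -fun d => cutVec G w u p a (u, d) - cutVec G w u p a (p, d) := by
      funext d
      exact (neg_sub _ _).symm
    rw [Finset.sum_eq_single_of_mem u ((G.mem_neighborFinset _ _).mpr huv.symm)
      fun k hk hku => hzero k hk (by simp [hku, hpu]), hcol, cutVec_sub_cutVec_of_adj hG huv,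
      mulVec_neg, show s(p, u) = s(u, p) from Sym2.eq_swap]
    change -((w s(u, p))⁻¹ * w s(u, p)) c a = _
    simp [hWW, one_apply, Pi.single_apply, huv.ne']
  · rw [Finset.sum_eq_zero fun k hk => hzero k hk (by simp [hpu, hpv])]
    simp [hpu, hpv]

variable (G w) in
noncomputable def pathCutVec {i j : Fin n} (p : G.Walk i j) (a : Fin s) :
    Fin n × Fin s → ℝ :=
  (p.darts.map fun d => cutVec G w d.fst d.snd a).sum

theorem matLap_mulVec_pathCutVec (hG : G.IsAcyclic) (hw : ∀ e ∈ G.edgeSet, IsUnit (w e))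
    {i j : Fin n} (p : G.Walk i j) (a : Fin s) :
    matLap G w *ᵥ pathCutVec G w p a = Pi.single (i, a) 1 - Pi.single (j, a) 1 := by
  induction p with
  | nil => simp [pathCutVec]
  | cons h q ih =>
    simp only [pathCutVec, SimpleGraph.Walk.darts_cons, List.map_cons, List.sum_cons,
      mulVec_add] at ih ⊢
    rw [ih, matLap_mulVec_cutVec hG h (hw _ (G.mem_edgeSet.mpr h))]
    abel

theorem pathCutVec_apply_start {i j : Fin n} {p : G.Walk i j} (hp : p.IsPath) (a b : Fin s) :
    pathCutVec G w p b (i, a) = (p.edges.map w).sum a b := by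
  have hentry := map_list_sum (entryAddMonoidHom ℝ a b) (p.edges.map w)
  rw [entryAddMonoidHom_apply] at hentry
  rw [hentry, pathCutVec, Pi.list_sum_apply, SimpleGraph.Walk.edges, List.map_map, List.map_map,
    List.map_map]
  refine congrArg List.sum (List.map_congr_left fun d hd => ?_)
  exact if_pos (hp.reachable_deleteEdges_of_mem_darts hd).1

theorem pathCutVec_apply_end (hG : G.IsAcyclic) {i j : Fin n} {p : G.Walk i j} (hp : p.IsPath)
    (a b : Fin s) : pathCutVec G w p b (j, a) = 0 := by
  rw [pathCutVec, Pi.list_sum_apply, List.map_map]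
  refine List.sum_eq_zero fun x hx => ?_
  obtain ⟨d, hd, rfl⟩ := List.mem_map.mp hx
  have hsep : ¬(G.deleteEdges {d.edge}).Reachable d.fst d.snd :=
    SimpleGraph.isBridge_iff.mp (SimpleGraph.isAcyclic_iff_forall_isBridge.mp hG d.edge_mem)
  have hj : ¬(G.deleteEdges {d.edge}).Reachable j d.fst := fun h =>
    hsep (h.symm.trans (hp.reachable_deleteEdges_of_mem_darts hd).2)
  exact if_neg hj

end MatLap

/-- Let `T` be a tree on `n` vertices with `s × s` real positive definite matrix
weights, `D` its distance matrix and `L` its Laplacian formed from the inverses of the weights.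
If `H` is any g-inverse of `L`, written in block form with `s × s` blocks `H_{i,j}`, then
`H_{i,i} + H_{j,j} - H_{i,j} - H_{j,i} = D_{i,j}` for all vertices `i, j`. -/
theorem ginverse_blocks_distance {n s : ℕ}
    (G : SimpleGraph (Fin n)) [DecidableRel G.Adj] (hT : G.IsTree)
    (w : Sym2 (Fin n) → Matrix (Fin s) (Fin s) ℝ)
    (hw : ∀ e ∈ G.edgeSet, (w e).PosDef)
    (D : Matrix (Fin n × Fin s) (Fin n × Fin s) ℝ)
    (hD : ∀ (i j : Fin n) (p : G.Walk i j), p.IsPath →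
      ∀ a b, D (i, a) (j, b) = ((p.edges.map w).sum) a b)
    (H : Matrix (Fin n × Fin s) (Fin n × Fin s) ℝ)
    (hH : matLap G w * H * matLap G w = matLap G w) :
    ∀ (i j : Fin n) (a b : Fin s),
      H (i, a) (i, b) + H (j, a) (j, b) - H (i, a) (j, b) - H (j, a) (i, b) = D (i, a) (j, b) := by
  intro i j a b
  obtain ⟨p, hp⟩ : ∃ p : G.Walk i j, p.IsPath := ⟨_, (hT.1.preconnected i j).some.toPath.2⟩
  have hunit : ∀ e ∈ G.edgeSet, IsUnit (w e) := fun e he => (hw e he).isUnit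
  have hL := matLap_mulVec_pathCutVec hT.2 hunit p
  have hL' : pathCutVec G w p a ᵥ* matLap G w = Pi.single (i, a) 1 - Pi.single (j, a) 1 := by
    rw [← mulVec_transpose, (matLap_isSymm fun e he => (hw e he).isHermitian).eq, hL]
  calc H (i, a) (i, b) + H (j, a) (j, b) - H (i, a) (j, b) - H (j, a) (i, b)
      = (Pi.single (i, a) 1 - Pi.single (j, a) 1) ⬝ᵥ
          H *ᵥ (Pi.single (i, b) 1 - Pi.single (j, b) 1) := by
        simp only [mulVec_sub, mulVec_single, MulOpposite.op_one, one_smul, dotProduct_sub,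
          sub_dotProduct, single_dotProduct, col_apply, one_mul]
        ring
    _ = (Pi.single (i, a) 1 - Pi.single (j, a) 1) ⬝ᵥ pathCutVec G w p b :=
        dotProduct_mulVec_of_mul_mul_eq hH hL' (hL b)
    _ = D (i, a) (j, b) := by
        simp [pathCutVec_apply_start hp, pathCutVec_apply_end hT.2 hp, hD i j p hp]
end
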